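/- If every variable of a CNF instance appears in exactly three clauses and each clause contains two or three distinct variables with all literals positive or all negative (monotone), and additionally the instance arises by applying Gold's rule to every mixed clause of an instance where each variable appears exactly three times with one literal appearing twice and the complementary literal once, then each variable of the resulting instance still appears at most three times and the incidence graph remains planar if the original incidence graph was planar. -/

import Mathlib

/-- A literal is a sign together with a variable; `(true, v)` is the positive
literal `v` and `(false, v)` is the negative literal `¬v`. -/
abbrev Lit (V : Type*) := Bool × V

/-- A clause is a finite set of literals. -/
abbrev Clause (V : Type*) := Finset (Lit V)

/-- An assignment satisfies a clause if it makes at least one literal true. -/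
def SatClause {V : Type*} (σ : V → Bool) (C : Clause V) : Prop :=
  ∃ l ∈ C, σ l.2 = l.1

/-- An assignment satisfies a CNF formula (a collection of clauses) if it
satisfies every clause. -/
def Sat {V : Type*} (σ : V → Bool) (F : Set (Clause V)) : Prop :=
  ∀ C ∈ F, SatClause σ C

/-- A formula is satisfiable if some assignment satisfies it. -/
def Satisfiable {V : Type*} (F : Set (Clause V)) : Prop :=
  ∃ σ, Sat σ F

/-- A variable occurs (positively or negatively) in a clause. -/
def VarInClause {V : Type*} (v : V) (C : Clause V) : Prop :=
  (true, v) ∈ C ∨ (false, v) ∈ C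

/-- A variable occurs in a formula. -/
def VarInFormula {V : Type*} (v : V) (F : Set (Clause V)) : Prop :=
  ∃ C ∈ F, VarInClause v C

/-- `H` is a minor of `G`: there is a family of nonempty, pairwise disjoint,
connected branch sets in `G`, one for each vertex of `H`, such that every edge
of `H` is realized by an edge of `G` between the corresponding branch sets. -/
def SimpleGraph.IsMinorOf {β α : Type*} (H : SimpleGraph β) (G : SimpleGraph α) : Prop :=
  ∃ B : β → Set α,
    (∀ b, (B b).Nonempty) ∧
    (Pairwise fun b₁ b₂ => Disjoint (B b₁) (B b₂)) ∧
    (∀ b, (G.induce (B b)).Connected) ∧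
    ∀ ⦃b₁ b₂⦄, H.Adj b₁ b₂ → ∃ u ∈ B b₁, ∃ v ∈ B b₂, G.Adj u v

/-- Planarity, via Wagner's characterization: a graph is planar iff it has
neither `K₅` nor `K₃,₃` as a minor. -/
def SimpleGraph.IsPlanar {α : Type*} (G : SimpleGraph α) : Prop :=
  ¬ (completeGraph (Fin 5)).IsMinorOf G ∧
  ¬ (completeBipartiteGraph (Fin 3) (Fin 3)).IsMinorOf G

/-- The bipartite variable–clause incidence graph of a formula: one vertex per
variable, one vertex per clause, with an edge whenever the variable occurs
(positively or negatively) in the clause. -/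
def IncidenceGraph {V : Type*} (F : Set (Clause V)) : SimpleGraph (V ⊕ F) where
  Adj p q :=
    (∃ v C, p = Sum.inl v ∧ q = Sum.inr C ∧ VarInClause v (C : Clause V)) ∨
    (∃ v C, q = Sum.inl v ∧ p = Sum.inr C ∧ VarInClause v (C : Clause V))
  symm := by
    refine ⟨?_⟩
    rintro p q (⟨v, C, h1, h2, h3⟩ | ⟨v, C, h1, h2, h3⟩)
    · exact Or.inr ⟨v, C, h1, h2, h3⟩
    · exact Or.inl ⟨v, C, h1, h2, h3⟩
  loopless := by
    refine ⟨?_⟩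
    rintro p (⟨v, C, rfl, h2, -⟩ | ⟨v, C, rfl, h2, -⟩) <;> exact Sum.inl_ne_inr h2

open scoped Classical

/-- The positive literals of a clause. -/
def posPart {V : Type*} (C : Clause V) : Clause V := C.filter (fun l => l.1 = true)

/-- The negative literals of a clause. -/
def negPart {V : Type*} (C : Clause V) : Clause V := C.filter (fun l => l.1 = false)

/-- A clause is mixed if it contains a positive and a negative literal. -/
def IsMixed {V : Type*} (C : Clause V) : Prop :=
  (posPart C).Nonempty ∧ (negPart C).Nonempty

/-- The number of clauses of `F` in which the variable `x` appears. -/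
noncomputable def appearances {V : Type*} (x : V) (F : Finset (Clause V)) : ℕ :=
  (F.filter (fun C => VarInClause x C)).card

/-- The number of clauses of `F` in which `x` appears positively. -/
noncomputable def posApps {V : Type*} (x : V) (F : Finset (Clause V)) : ℕ :=
  (F.filter (fun C => (true, x) ∈ C)).card

/-- The number of clauses of `F` in which `x` appears negatively. -/
noncomputable def negApps {V : Type*} (x : V) (F : Finset (Clause V)) : ℕ :=
  (F.filter (fun C => (false, x) ∈ C)).card

/-- The instance obtained from `F` by applying Gold's rule to every mixed
clause, using the fresh variable `fresh C` for the mixed clause `C`. -/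
noncomputable def goldTransform {V : Type*} [DecidableEq V]
    (F : Finset (Clause V)) (fresh : Clause V → V) : Finset (Clause V) :=
  F.filter (fun C => ¬ IsMixed C) ∪
    (F.filter (fun C => IsMixed C)).image (fun C => posPart C ∪ {(true, fresh C)}) ∪
    (F.filter (fun C => IsMixed C)).image (fun C => negPart C ∪ {(false, fresh C)})

/-!
A variable that is not fresh occurs with a given sign in no more clauses after the transformation
than before, since every new clause containing the literal is the image of an old one containing
it (a half `C⁺ ∪ {u}` is the image of `C`). The fresh variable of `C` occurs only in the two halves
of `C`.

For planarity, a mixed clause `C` with at most three variables has a side consisting of a single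
variable `v`. In the new incidence graph the edge `v - C` becomes the path
`v - (C's half on that side) - u - (C's other half)`, while every other variable keeps its edge
to a half representing `C`. So the old incidence graph is obtained from the new one by suppressing
vertices of degree two, which cannot destroy a `K₅` or `K₃,₃` minor since these have minimum
degree three.
-/

namespace SimpleGraph

variable {α β γ ι : Type*} {G : SimpleGraph β} {H : SimpleGraph γ}

theorem Reachable.map_of_forall_adj {G' : SimpleGraph α} (f : β → α)
    (hf : ∀ u v, G.Adj u v → G'.Reachable (f u) (f v)) {u v : β} (h : G.Reachable u v) :
    G'.Reachable (f u) (f v) := by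
  rw [reachable_iff_reflTransGen] at h ⊢
  exact Relation.ReflTransGen.lift' f
    (fun a b hab => (reachable_iff_reflTransGen _ _).1 (hf a b hab)) _ _ h

theorem subset_singleton_of_induce_connected {S : Set β} (hS : (G.induce S).Connected) {x : β}
    (hx : x ∈ S) (hnbr : ∀ w ∈ S, ¬ G.Adj x w) : S ⊆ {x} := by
  intro w hw
  obtain ⟨p⟩ := hS.preconnected ⟨x, hx⟩ ⟨w, hw⟩
  cases p with
  | nil => rfl
  | cons h _ => exact absurd h (hnbr _ (Subtype.prop _))

theorem encard_neighborSet_le_of_mapsTo {B : γ → Set β}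
    (hB : Pairwise fun b₁ b₂ => Disjoint (B b₁) (B b₂)) {T : Set β} (b : γ) (f : γ → β)
    (hf : ∀ b', H.Adj b b' → f b' ∈ T ∧ f b' ∈ B b') :
    (H.neighborSet b).encard ≤ T.encard :=
  Set.encard_le_encard_of_injOn (fun b' hb' => (hf b' hb').1) fun b₁ h₁ b₂ h₂ he => by
    by_contra hne
    exact Set.disjoint_left.mp (hB hne) (hf b₁ h₁).2 (he ▸ (hf b₂ h₂).2)

/-- A vertex of minimum degree three has more than two neighbouring branch sets, so its branch
set is not `{x}`; being connected, it contains a neighbour of `x`. -/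
theorem mem_or_mem_of_forall_adj (hH : ∀ b, 3 ≤ (H.neighborSet b).encard) {B : γ → Set β}
    (hdisj : Pairwise fun b₁ b₂ => Disjoint (B b₁) (B b₂))
    (hconn : ∀ b, (G.induce (B b)).Connected)
    (hedge : ∀ ⦃b₁ b₂⦄, H.Adj b₁ b₂ → ∃ u ∈ B b₁, ∃ v ∈ B b₂, G.Adj u v)
    {x y z : β} (hnbr : ∀ w, G.Adj x w → w = y ∨ w = z) {b : γ} (hx : x ∈ B b) :
    y ∈ B b ∨ z ∈ B b := by
  by_contra! hout
  have hsingle : B b ⊆ {x} := subset_singleton_of_induce_connected (hconn b) hx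
    fun w hw hxw => by rcases hnbr w hxw with rfl | rfl; exacts [hout.1 hw, hout.2 hw]
  have hle := encard_neighborSet_le_of_mapsTo hdisj (T := {y, z}) b
    (fun b' => if y ∈ B b' then y else z) fun b' hb' => by
      obtain ⟨u, hu, v, hv, huv⟩ := hedge hb'
      obtain rfl : u = x := hsingle hu
      split_ifs with hyb
      · exact ⟨.inl rfl, hyb⟩
      · rcases hnbr v huv with rfl | rfl
        exacts [absurd hv hyb, ⟨.inr rfl, hv⟩]
  have : (3 : ℕ∞) ≤ 1 + 1 :=
    ((hH b).trans hle).trans (by simpa using Set.encard_insert_le {z} y)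
  norm_num at this

theorem IsMinorOf.mono {G₁ G₂ : SimpleGraph β} (hle : G₁ ≤ G₂) (h : H.IsMinorOf G₁) :
    H.IsMinorOf G₂ := by
  obtain ⟨B, hne, hdisj, hconn, hedge⟩ := h
  refine ⟨B, hne, hdisj, fun b => (hconn b).mono fun _ _ h => hle h, fun b₁ b₂ hb => ?_⟩
  obtain ⟨u, hu, v, hv, huv⟩ := hedge hb
  exact ⟨u, hu, v, hv, hle huv⟩

theorem IsMinorOf.comap (hH : ∀ b, ∃ b', H.Adj b b') {e : α → β} (he : e.Injective)
    (hiso : ∀ w ∉ Set.range e, ∀ u, ¬ G.Adj w u) (h : H.IsMinorOf G) :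
    H.IsMinorOf (G.comap e) := by
  obtain ⟨B, -, hdisj, hconn, hedge⟩ := h
  have hsub : ∀ b, B b ⊆ Set.range e := by
    intro b w hw
    by_contra hwe
    obtain ⟨u, hu, v, -, huv⟩ := hedge (hH b).choose_spec
    obtain rfl : u = w :=
      subset_singleton_of_induce_connected (hconn b) hw (fun v _ => hiso w hwe v) hu
    exact hiso u hwe v huv
  refine ⟨fun b => e ⁻¹' B b, fun b => ?_, fun b₁ b₂ h => (hdisj h).preimage e, fun b => ?_,
    fun b₁ b₂ hb => ?_⟩
  · obtain ⟨u, hu, -⟩ := hedge (hH b).choose_spec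
    obtain ⟨p, rfl⟩ := hsub b hu
    exact ⟨p, hu⟩
  · let φ : e ⁻¹' B b → B b := fun p => ⟨e p, p.2⟩
    have hφ : φ.Bijective := by
      refine ⟨fun p q hpq => Subtype.ext (he (congrArg Subtype.val hpq)), fun w => ?_⟩
      obtain ⟨p, hp⟩ := hsub b w.2
      exact ⟨⟨p, show e p ∈ B b from hp ▸ w.2⟩, Subtype.ext hp⟩
    exact (Iso.connected_iff
      { toEquiv := Equiv.ofBijective φ hφ, map_rel_iff' := Iff.rfl }).2 (hconn b)
  · obtain ⟨u, hu, v, hv, huv⟩ := hedge hb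
    obtain ⟨p, rfl⟩ := hsub _ hu
    obtain ⟨q, rfl⟩ := hsub _ hv
    exact ⟨p, hu, q, hv, huv⟩

def suppress (G : SimpleGraph β) (x y z : ι → β) : SimpleGraph β :=
  fromRel fun u v => (G.Adj u v ∧ u ∉ Set.range x ∧ v ∉ Set.range x) ∨ ∃ i, u = y i ∧ v = z i

section Suppress

variable {x y z : ι → β}

theorem suppress_adj_iff {u w : β} :
    (G.suppress x y z).Adj u w ↔ u ≠ w ∧ ((G.Adj u w ∧ u ∉ Set.range x ∧ w ∉ Set.range x) ∨
      ∃ i, s(u, w) = s(y i, z i)) := by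
  simp only [suppress, fromRel_adj, Sym2.eq_iff]
  constructor
  · rintro ⟨hne, (h | ⟨i, h⟩) | (⟨h, hw, hu⟩ | ⟨i, h⟩)⟩
    exacts [⟨hne, .inl h⟩, ⟨hne, .inr ⟨i, .inl h⟩⟩, ⟨hne, .inl ⟨h.symm, hu, hw⟩⟩,
      ⟨hne, .inr ⟨i, .inr h.symm⟩⟩]
  · rintro ⟨hne, h | ⟨i, h | h⟩⟩
    exacts [⟨hne, .inl (.inl h)⟩, ⟨hne, .inl (.inr ⟨i, h⟩)⟩, ⟨hne, .inr (.inr ⟨i, h.symm⟩)⟩]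

theorem not_suppress_adj_left (hy : ∀ j, y j ≠ x i) (hz : ∀ j, z j ≠ x i) (w : β) :
    ¬ (G.suppress x y z).Adj (x i) w := by
  rw [suppress_adj_iff]
  rintro ⟨-, ⟨-, h, -⟩ | ⟨j, hj⟩⟩
  · exact h ⟨i, rfl⟩
  rcases Sym2.eq_iff.1 hj with ⟨h, -⟩ | ⟨h, -⟩
  exacts [hy j h.symm, hz j h.symm]

variable (hnbr : ∀ i w, G.Adj (x i) w ↔ w = y i ∨ w = z i)
include hnbr

theorem suppress_adj_of_adj_of_adj {u v : β} (hu : G.Adj (x i) u) (hv : G.Adj (x i) v)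
    (hne : u ≠ v) : (G.suppress x y z).Adj u v := by
  refine suppress_adj_iff.2 ⟨hne, .inr ⟨i, ?_⟩⟩
  rw [hnbr] at hu hv
  rcases hu with rfl | rfl <;> rcases hv with rfl | rfl
  exacts [absurd rfl hne, rfl, Sym2.eq_swap, absurd rfl hne]

theorem suppress_adj_or_eq_of_adj (hy : ∀ i j, y i ≠ x j) (hz : ∀ i j, z i ≠ x j)
    {u v u' v' : β} (huv : G.Adj u v)
    (hu : (u' = u ∧ u ∉ Set.range x) ∨ ∃ i, u = x i ∧ G.Adj u u')
    (hv : (v' = v ∧ v ∉ Set.range x) ∨ ∃ i, v = x i ∧ G.Adj v v') :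
    u' = v' ∨ (G.suppress x y z).Adj u' v' := by
  rcases hu with ⟨rfl, hu⟩ | ⟨i, rfl, hu⟩ <;> rcases hv with ⟨rfl, hv⟩ | ⟨j, rfl, hv⟩
  · exact .inr (suppress_adj_iff.2 ⟨huv.ne, .inl ⟨huv, hu, hv⟩⟩)
  · exact or_iff_not_imp_left.2 (suppress_adj_of_adj_of_adj hnbr huv.symm hv)
  · exact or_iff_not_imp_left.2 (suppress_adj_of_adj_of_adj hnbr hu huv)
  · rcases (hnbr i _).1 huv with h | h
    exacts [absurd h.symm (hy i j), absurd h.symm (hz i j)]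

/-- The new branch sets are the old ones without the suppressed vertices. Sending a suppressed
vertex to a neighbour in its branch set (`g`) turns edges of `G` into edges of the suppressed
graph, or contracts them. -/
theorem IsMinorOf.suppress (hH : ∀ b, 3 ≤ (H.neighborSet b).encard)
    (hy : ∀ i j, y i ≠ x j) (hz : ∀ i j, z i ≠ x j) (h : H.IsMinorOf G) :
    H.IsMinorOf (G.suppress x y z) := by
  obtain ⟨B, hne, hdisj, hconn, hedge⟩ := h
  have hrep : ∀ b, ∀ w ∈ B b, ∃ w' ∈ B b \ Set.range x,
      (w' = w ∧ w ∉ Set.range x) ∨ ∃ i, w = x i ∧ G.Adj w w' := by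
    intro b w hw
    by_cases hwx : w ∈ Set.range x
    · obtain ⟨i, rfl⟩ := hwx
      rcases mem_or_mem_of_forall_adj hH hdisj hconn hedge (fun w => (hnbr i w).1) hw with h | h
      · exact ⟨y i, ⟨h, fun ⟨j, hj⟩ => hy i j hj.symm⟩, .inr ⟨i, rfl, (hnbr i _).2 (.inl rfl)⟩⟩
      · exact ⟨z i, ⟨h, fun ⟨j, hj⟩ => hz i j hj.symm⟩, .inr ⟨i, rfl, (hnbr i _).2 (.inr rfl)⟩⟩
    · exact ⟨w, ⟨hw, hwx⟩, .inl ⟨rfl, hwx⟩⟩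
  choose g hgB hg using hrep
  have hfix : ∀ b w (hw : w ∈ B b), w ∉ Set.range x → g b w hw = w := fun b w hw hwx =>
    (hg b w hw).resolve_right (fun ⟨i, hi, _⟩ => hwx ⟨i, hi.symm⟩) |>.1
  refine ⟨fun b => B b \ Set.range x, fun b => ?_,
    fun b₁ b₂ h => (hdisj h).mono Set.sdiff_subset Set.sdiff_subset, fun b => ?_,
    fun b₁ b₂ hb => ?_⟩
  · obtain ⟨w, hw⟩ := hne b
    exact ⟨g b w hw, hgB b w hw⟩
  · refine (connected_iff _).2 ⟨fun u v => ?_, ?_⟩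
    · let f : ↥(B b) → ↥(B b \ Set.range x) := fun w => ⟨g b w w.2, hgB b w w.2⟩
      have hf : ∀ w : ↥(B b \ Set.range x), f ⟨w, w.2.1⟩ = w := fun w =>
        Subtype.ext (hfix b w w.2.1 w.2.2)
      rw [← hf u, ← hf v]
      refine ((hconn b).preconnected _ _).map_of_forall_adj f fun w w' hww' => ?_
      rcases suppress_adj_or_eq_of_adj hnbr hy hz hww' (hg b w w.2) (hg b w' w'.2) with h | h
      exacts [(Subtype.ext h : f w = f w') ▸ Reachable.refl _, Adj.reachable h]
    · obtain ⟨w, hw⟩ := hne b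
      exact ⟨⟨g b w hw, hgB b w hw⟩⟩
  · obtain ⟨u, hu, v, hv, huv⟩ := hedge hb
    refine ⟨g b₁ u hu, hgB b₁ u hu, g b₂ v hv, hgB b₂ v hv, ?_⟩
    refine (suppress_adj_or_eq_of_adj hnbr hy hz huv (hg b₁ u hu) (hg b₂ v hv)).resolve_left ?_
    intro heq
    exact Set.disjoint_left.mp (hdisj (H.ne_of_adj hb)) (hgB b₁ u hu).1 (heq ▸ (hgB b₂ v hv).1)

end Suppress

/-- Suppression of the inner vertices of the paths `a i - s i - t i - c i`. -/
def suppressPath (G : SimpleGraph β) (s t a c : ι → β) : SimpleGraph β :=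
  (G.suppress t s c).suppress s a c

section SuppressPath

variable {s t a c : ι → β}

theorem suppressPath_adj {u w : β} (h : (G.suppressPath s t a c).Adj u w) :
    (G.Adj u w ∧ u ∉ Set.range t ∧ w ∉ Set.range t) ∨ ∃ i, s(u, w) = s(a i, c i) := by
  obtain ⟨-, ⟨h, hu, hw⟩ | h⟩ := suppress_adj_iff.1 h
  · obtain ⟨-, h | ⟨i, hi⟩⟩ := suppress_adj_iff.1 h
    · exact .inl h
    · rcases Sym2.eq_iff.1 hi with ⟨rfl, -⟩ | ⟨-, rfl⟩
      exacts [absurd ⟨i, rfl⟩ hu, absurd ⟨i, rfl⟩ hw]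
  · exact .inr h

theorem IsMinorOf.suppressPath (hH : ∀ b, 3 ≤ (H.neighborSet b).encard)
    (hs : ∀ i w, G.Adj (s i) w ↔ w = a i ∨ w = t i)
    (ht : ∀ i w, G.Adj (t i) w ↔ w = s i ∨ w = c i) (hsinj : s.Injective)
    (hst : ∀ i j, s i ≠ t j) (hat : ∀ i j, a i ≠ t j) (hct : ∀ i j, c i ≠ t j)
    (has : ∀ i j, a i ≠ s j) (hcs : ∀ i j, c i ≠ s j) (h : H.IsMinorOf G) :
    H.IsMinorOf (G.suppressPath s t a c) := by
  have hs' : ∀ i w, (G.suppress t s c).Adj (s i) w ↔ w = a i ∨ w = c i := by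
    intro i w
    rw [suppress_adj_iff]
    constructor
    · rintro ⟨-, ⟨hsw, -, hw⟩ | ⟨j, hj⟩⟩
      · exact ((hs i w).1 hsw).imp_right fun hwt => absurd ⟨i, hwt.symm⟩ hw
      · rcases Sym2.eq_iff.1 hj with ⟨hij, rfl⟩ | ⟨hij, -⟩
        exacts [.inr (hsinj hij ▸ rfl), absurd hij.symm (hcs j i)]
    · rintro (rfl | rfl)
      · have hsa := (hs i (a i)).2 (.inl rfl)
        exact ⟨hsa.ne, .inl ⟨hsa, fun ⟨j, hj⟩ => hst i j hj.symm, fun ⟨j, hj⟩ => hat i j hj.symm⟩⟩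
      · exact ⟨(hcs i i).symm, .inr ⟨i, rfl⟩⟩
  exact (h.suppress ht hH hst hct).suppress hs' hH has hcs

end SuppressPath

end SimpleGraph

theorem three_le_encard_neighborSet_completeGraph (b : Fin 5) :
    3 ≤ ((SimpleGraph.completeGraph (Fin 5)).neighborSet b).encard := by
  rw [SimpleGraph.completeGraph, SimpleGraph.neighborSet_top, ← Fin.range_succAbove]
  calc (3 : ℕ∞) ≤ ENat.card (Fin 4) := by norm_num
    _ ≤ _ := Fin.succAbove_right_injective.encard_range

theorem three_le_encard_neighborSet_completeBipartiteGraph (b : Fin 3 ⊕ Fin 3) :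
    3 ≤ ((completeBipartiteGraph (Fin 3) (Fin 3)).neighborSet b).encard := by
  rcases b with i | i
  · calc (3 : ℕ∞) = ENat.card (Fin 3) := by simp
      _ ≤ (Set.range Sum.inr).encard := Sum.inr_injective.encard_range
      _ ≤ _ := Set.encard_le_encard (by rintro _ ⟨j, rfl⟩; simp)
  · calc (3 : ℕ∞) = ENat.card (Fin 3) := by simp
      _ ≤ (Set.range Sum.inl).encard := Sum.inl_injective.encard_range
      _ ≤ _ := Set.encard_le_encard (by rintro _ ⟨j, rfl⟩; simp)

section Clauses

variable {V : Type*}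

theorem varInClause_of_mem {b : Bool} {w : V} {C : Clause V} (h : (b, w) ∈ C) :
    VarInClause w C := by
  cases b
  exacts [.inr h, .inl h]

noncomputable def litApps (l : Lit V) (F : Finset (Clause V)) : ℕ :=
  (F.filter (l ∈ ·)).card

theorem litApps_eq_zero {l : Lit V} {F : Finset (Clause V)} (h : ∀ C ∈ F, l ∉ C) :
    litApps l F = 0 :=
  Finset.card_eq_zero.2 (Finset.filter_eq_empty_iff.2 h)

theorem litApps_le_of_forall_exists {l : Lit V} {F F' : Finset (Clause V)}
    (f : Clause V → Clause V) (hf : ∀ D ∈ F', l ∈ D → ∃ C ∈ F, l ∈ C ∧ f C = D) :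
    litApps l F' ≤ litApps l F :=
  Finset.card_le_card_of_surjOn f fun D hD => by
    obtain ⟨C, hC, hlC, rfl⟩ := hf D (Finset.mem_filter.1 hD).1 (Finset.mem_filter.1 hD).2
    exact ⟨C, Finset.mem_filter.2 ⟨hC, hlC⟩, rfl⟩

theorem appearances_le_posApps_add_negApps (x : V) (F : Finset (Clause V)) :
    appearances x F ≤ posApps x F + negApps x F :=
  calc appearances x F
      ≤ (F.filter (fun C => (true, x) ∈ C) ∪ F.filter (fun C => (false, x) ∈ C)).card :=
        Finset.card_le_card fun C hC => by
          rw [Finset.mem_filter] at hC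
          rw [Finset.mem_union, Finset.mem_filter, Finset.mem_filter]
          exact hC.2.imp (⟨hC.1, ·⟩) (⟨hC.1, ·⟩)
    _ ≤ posApps x F + negApps x F := Finset.card_union_le _ _

variable {F : Set (Clause V)}

@[simp]
theorem incidenceGraph_adj_inl_inr {v : V} {C : F} :
    (IncidenceGraph F).Adj (.inl v) (.inr C) ↔ VarInClause v C := by
  simp [IncidenceGraph]

@[simp]
theorem incidenceGraph_adj_inr_inl {v : V} {C : F} :
    (IncidenceGraph F).Adj (.inr C) (.inl v) ↔ VarInClause v C := by
  simp [IncidenceGraph]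

@[simp]
theorem not_incidenceGraph_adj_inl_inl {v w : V} :
    ¬ (IncidenceGraph F).Adj (.inl v) (.inl w) := by
  simp [IncidenceGraph]

@[simp]
theorem not_incidenceGraph_adj_inr_inr {C D : F} : ¬ (IncidenceGraph F).Adj (.inr C) (.inr D) := by
  simp [IncidenceGraph]

end Clauses

section GoldTransform

variable {V : Type*} [DecidableEq V] {F : Finset (Clause V)} {fresh : Clause V → V}

theorem exists_side_eq_singleton {C : Clause V} (hsize : (C.image Prod.snd).card ≤ 3)
    (hnocomp : ∀ v : V, ¬ ((true, v) ∈ C ∧ (false, v) ∈ C)) (hmix : IsMixed C) :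
    ∃ b v, ∀ w, (b, w) ∈ C ↔ w = v := by
  set P := (C.image Prod.snd).filter fun w => (true, w) ∈ C
  set N := (C.image Prod.snd).filter fun w => (true, w) ∉ C
  have hP : ∀ w, w ∈ P ↔ (true, w) ∈ C := fun w => by
    simp only [P, Finset.mem_filter, Finset.mem_image]
    exact ⟨And.right, fun h => ⟨⟨_, h, rfl⟩, h⟩⟩
  have hN : ∀ w, w ∈ N ↔ (false, w) ∈ C := fun w => by
    simp only [N, Finset.mem_filter, Finset.mem_image]
    constructor
    · rintro ⟨⟨⟨b, w⟩, h, rfl⟩, ht⟩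
      cases b
      exacts [h, absurd h ht]
    · exact fun h => ⟨⟨_, h, rfl⟩, fun ht => hnocomp w ⟨ht, h⟩⟩
  have hcard : P.card + N.card ≤ 3 := (Finset.card_filter_add_card_filter_not _).trans_le hsize
  obtain ⟨⟨bp, wp⟩, hwp⟩ := hmix.1
  obtain ⟨⟨bn, wn⟩, hwn⟩ := hmix.2
  simp only [_root_.posPart, _root_.negPart, Finset.mem_filter] at hwp hwn
  obtain ⟨hwp, rfl⟩ := hwp
  obtain ⟨hwn, rfl⟩ := hwn
  have hPpos : 0 < P.card := Finset.card_pos.2 ⟨wp, (hP wp).2 hwp⟩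
  have hNpos : 0 < N.card := Finset.card_pos.2 ⟨wn, (hN wn).2 hwn⟩
  rcases (by omega : P.card = 1 ∨ N.card = 1) with h | h
  · obtain ⟨v, hv⟩ := Finset.card_eq_one.1 h
    exact ⟨true, v, fun w => by rw [← hP, hv, Finset.mem_singleton]⟩
  · obtain ⟨v, hv⟩ := Finset.card_eq_one.1 h
    exact ⟨false, v, fun w => by rw [← hN, hv, Finset.mem_singleton]⟩

/-- The clause `C⁺ ∪ {u}` (for `b = true`) or `C⁻ ∪ {¬u}` (for `b = false`) of Gold's rule,
where `u = fresh C`. -/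
def goldHalf (fresh : Clause V → V) (b : Bool) (C : Clause V) : Clause V :=
  C.filter (fun l => l.1 = b) ∪ {(b, fresh C)}

theorem goldTransform_eq (F : Finset (Clause V)) (fresh : Clause V → V) :
    goldTransform F fresh = F.filter (fun C => ¬ IsMixed C) ∪
      (F.filter IsMixed).image (goldHalf fresh true) ∪
      (F.filter IsMixed).image (goldHalf fresh false) :=
  rfl

theorem mem_goldTransform {D : Clause V} :
    D ∈ goldTransform F fresh ↔
      (D ∈ F ∧ ¬ IsMixed D) ∨ ∃ C ∈ F, IsMixed C ∧ ∃ b, goldHalf fresh b C = D := by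
  rw [goldTransform_eq]
  simp only [Finset.mem_union, Finset.mem_filter, Finset.mem_image]
  aesop

theorem goldHalf_mem_goldTransform {C : Clause V} (hC : C ∈ F) (hmix : IsMixed C) (b : Bool) :
    goldHalf fresh b C ∈ goldTransform F fresh :=
  mem_goldTransform.2 (.inr ⟨C, hC, hmix, b, rfl⟩)

@[simp]
theorem mem_goldHalf {l : Lit V} {b : Bool} {C : Clause V} :
    l ∈ goldHalf fresh b C ↔ (l ∈ C ∧ l.1 = b) ∨ l = (b, fresh C) := by
  simp [goldHalf, or_comm]

theorem varInClause_goldHalf {w : V} {b : Bool} {C : Clause V} :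
    VarInClause w (goldHalf fresh b C) ↔ (b, w) ∈ C ∨ w = fresh C := by
  cases b <;> simp [VarInClause]

theorem goldHalf_notMem (hnew : ∀ C ∈ F, IsMixed C → ∀ C' ∈ F, ¬ VarInClause (fresh C) C')
    {C : Clause V} (hC : C ∈ F) (hmix : IsMixed C) (b : Bool) : goldHalf fresh b C ∉ F :=
  fun h => hnew C hC hmix _ h (varInClause_goldHalf.2 (.inr rfl))

theorem litApps_goldTransform_le {x : V} (hx : ∀ C ∈ F, IsMixed C → x ≠ fresh C) (b : Bool) :
    litApps (b, x) (goldTransform F fresh) ≤ litApps (b, x) F := by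
  refine litApps_le_of_forall_exists (fun C => if IsMixed C then goldHalf fresh b C else C)
    fun D hD hxD => ?_
  rcases mem_goldTransform.1 hD with ⟨hDF, hmix⟩ | ⟨C, hC, hmix, b', rfl⟩
  · exact ⟨D, hDF, hxD, if_neg hmix⟩
  · rcases mem_goldHalf.1 hxD with ⟨h, rfl⟩ | h
    · exact ⟨C, hC, h, if_pos hmix⟩
    · exact absurd (Prod.ext_iff.1 h).2 (hx C hC hmix)

abbrev MixedClause (F : Finset (Clause V)) := {C // C ∈ F ∧ IsMixed C}

def halfVertex (fresh : Clause V → V) (i : MixedClause F) (b : Bool) :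
    V ⊕ ↥(↑(goldTransform F fresh) : Set (Clause V)) :=
  .inr ⟨goldHalf fresh b i.1, goldHalf_mem_goldTransform i.2.1 i.2.2 b⟩

noncomputable def goldRep (fresh : Clause V → V) (sgn : MixedClause F → Bool) :
    V ⊕ ↥(↑F : Set (Clause V)) → V ⊕ ↥(↑(goldTransform F fresh) : Set (Clause V))
  | .inl u => .inl u
  | .inr D => if h : IsMixed D.1 then halfVertex fresh ⟨D.1, D.2, h⟩ (sgn ⟨D.1, D.2, h⟩)
      else .inr ⟨D.1, mem_goldTransform.2 (.inl ⟨D.2, h⟩)⟩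

/-- If the side `!sgn i` of the mixed clause `i` consists of the variable `v i` alone, the new
incidence graph contains the path `v i - halfVertex i (!sgn i) - fresh i - halfVertex i (sgn i)`,
whose inner vertices have degree two. Suppressing them leaves an edge from `v i` to the half
that represents `i` under `goldRep fresh sgn`. -/
def suppressedGoldGraph (fresh : Clause V → V) (sgn : MixedClause F → Bool)
    (v : MixedClause F → V) : SimpleGraph (V ⊕ ↥(↑(goldTransform F fresh) : Set (Clause V))) :=
  (IncidenceGraph (↑(goldTransform F fresh) : Set (Clause V))).suppressPath
    (fun i => halfVertex fresh i (!sgn i)) (fun i => .inl (fresh i.1)) (fun i => .inl (v i))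
    (fun i => halfVertex fresh i (sgn i))

theorem goldRep_mixedClause (sgn : MixedClause F → Bool) (i : MixedClause F) :
    goldRep fresh sgn (.inr ⟨i.1, i.2.1⟩) = halfVertex fresh i (sgn i) := by
  simp [goldRep, i.2.2]

theorem exists_eq_halfVertex_of_notMem_range_goldRep {sgn : MixedClause F → Bool}
    {w : V ⊕ ↥(↑(goldTransform F fresh) : Set (Clause V))}
    (hw : w ∉ Set.range (goldRep fresh sgn)) : ∃ i, w = halfVertex fresh i (!sgn i) := by
  rcases w with u | ⟨D, hD⟩
  · exact absurd ⟨.inl u, rfl⟩ hw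
  rcases mem_goldTransform.1 hD with ⟨hDF, hmix⟩ | ⟨C, hC, hmix, b, rfl⟩
  · exact absurd ⟨.inr ⟨D, hDF⟩, by simp only [goldRep, dif_neg hmix]⟩ hw
  · refine ⟨⟨C, hC, hmix⟩, ?_⟩
    obtain rfl | rfl := b.eq_or_eq_not (sgn ⟨C, hC, hmix⟩)
    · exact absurd ⟨.inr ⟨C, hC⟩, goldRep_mixedClause sgn ⟨C, hC, hmix⟩⟩ hw
    · rfl

theorem incidenceGraph_goldTransform_adj_halfVertex (i : MixedClause F) (b : Bool)
    (w : V ⊕ ↥(↑(goldTransform F fresh) : Set (Clause V))) :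
    (IncidenceGraph (↑(goldTransform F fresh) : Set (Clause V))).Adj (halfVertex fresh i b) w ↔
      ∃ u, w = .inl u ∧ ((b, u) ∈ i.1 ∨ u = fresh i.1) := by
  rcases w with u | D
  · simp only [halfVertex, incidenceGraph_adj_inr_inl, varInClause_goldHalf, Sum.inl.injEq,
      exists_eq_left']
  · simp only [halfVertex, not_incidenceGraph_adj_inr_inr, reduceCtorEq, false_and, exists_false]

theorem varInClause_of_adj_goldRep {sgn : MixedClause F → Bool} {u : V}
    {D : ↥(↑F : Set (Clause V))} (hu : ∀ i : MixedClause F, u ≠ fresh i.1)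
    (h : (IncidenceGraph (↑(goldTransform F fresh) : Set (Clause V))).Adj (.inl u)
      (goldRep fresh sgn (.inr D))) :
    VarInClause u D.1 := by
  simp only [goldRep] at h
  split_ifs at h with hmix
  · rw [halfVertex, incidenceGraph_adj_inl_inr, varInClause_goldHalf] at h
    exact h.elim varInClause_of_mem fun h => absurd h (hu ⟨D.1, D.2, hmix⟩)
  · rwa [incidenceGraph_adj_inl_inr] at h

section Fresh

variable (hinj : Set.InjOn fresh {C | C ∈ F ∧ IsMixed C})
  (hnew : ∀ C ∈ F, IsMixed C → ∀ C' ∈ F, ¬ VarInClause (fresh C) C')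
include hinj hnew

theorem eq_of_varInClause_fresh_goldHalf {C C' : Clause V} (hC : C ∈ F) (hmix : IsMixed C)
    (hC' : C' ∈ F) (hmix' : IsMixed C') {b : Bool}
    (h : VarInClause (fresh C) (goldHalf fresh b C')) : C = C' := by
  rcases varInClause_goldHalf.1 h with h | h
  · exact absurd (varInClause_of_mem h) (hnew C hC hmix C' hC')
  · exact hinj ⟨hC, hmix⟩ ⟨hC', hmix'⟩ h

theorem goldHalf_inj {C C' : Clause V} (hC : C ∈ F) (hmix : IsMixed C) (hC' : C' ∈ F)
    (hmix' : IsMixed C') {b b' : Bool} (h : goldHalf fresh b C = goldHalf fresh b' C') :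
    b = b' ∧ C = C' := by
  have hmem : (b, fresh C) ∈ goldHalf fresh b' C' := h ▸ mem_goldHalf.2 (.inr rfl)
  rcases mem_goldHalf.1 hmem with ⟨h, -⟩ | h
  · exact absurd (varInClause_of_mem h) (hnew C hC hmix C' hC')
  · obtain ⟨rfl, h⟩ := Prod.ext_iff.1 h
    exact ⟨rfl, hinj ⟨hC, hmix⟩ ⟨hC', hmix'⟩ h⟩

theorem appearances_fresh_goldTransform_le_two {C : Clause V} (hC : C ∈ F) (hmix : IsMixed C) :
    appearances (fresh C) (goldTransform F fresh) ≤ 2 :=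
  calc appearances (fresh C) (goldTransform F fresh)
      ≤ ({goldHalf fresh true C, goldHalf fresh false C} : Finset (Clause V)).card := by
        refine Finset.card_le_card fun D hD => ?_
        obtain ⟨hD, hvar⟩ := Finset.mem_filter.1 hD
        rcases mem_goldTransform.1 hD with ⟨hDF, -⟩ | ⟨C', hC', hmix', b, rfl⟩
        · exact absurd hvar (hnew C hC hmix D hDF)
        · obtain rfl := eq_of_varInClause_fresh_goldHalf hinj hnew hC hmix hC' hmix' hvar
          cases b <;> simp
    _ ≤ 2 := Finset.card_le_two

theorem appearances_goldTransform_le_three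
    (happ : ∀ x : V, (∃ C ∈ F, VarInClause x C) →
      (posApps x F = 2 ∧ negApps x F = 1) ∨ (posApps x F = 1 ∧ negApps x F = 2))
    (x : V) : appearances x (goldTransform F fresh) ≤ 3 := by
  by_cases hx : ∃ C ∈ F, IsMixed C ∧ x = fresh C
  · obtain ⟨C, hC, hmix, rfl⟩ := hx
    exact (appearances_fresh_goldTransform_le_two hinj hnew hC hmix).trans (by norm_num)
  have hF : posApps x F + negApps x F ≤ 3 := by
    by_cases hocc : ∃ C ∈ F, VarInClause x C
    · rcases happ x hocc with ⟨h₁, h₂⟩ | ⟨h₁, h₂⟩ <;> omega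
    · have hpos : posApps x F = 0 := litApps_eq_zero fun C hC h => hocc ⟨C, hC, .inl h⟩
      have hneg : negApps x F = 0 := litApps_eq_zero fun C hC h => hocc ⟨C, hC, .inr h⟩
      omega
  have hx' : ∀ C ∈ F, IsMixed C → x ≠ fresh C := fun C hC hmix h => hx ⟨C, hC, hmix, h⟩
  calc appearances x (goldTransform F fresh)
      ≤ posApps x (goldTransform F fresh) + negApps x (goldTransform F fresh) :=
        appearances_le_posApps_add_negApps _ _
    _ ≤ posApps x F + negApps x F :=
        add_le_add (litApps_goldTransform_le hx' true) (litApps_goldTransform_le hx' false)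
    _ ≤ 3 := hF

theorem halfVertex_inj {i j : MixedClause F} {b b' : Bool} :
    halfVertex fresh i b = halfVertex fresh j b' ↔ i = j ∧ b = b' := by
  refine ⟨fun h => ?_, fun ⟨hij, hb⟩ => hij ▸ hb ▸ rfl⟩
  obtain ⟨hb, hij⟩ := goldHalf_inj hinj hnew i.2.1 i.2.2 j.2.1 j.2.2
    (congrArg Subtype.val (Sum.inr_injective h))
  exact ⟨Subtype.ext hij, hb⟩

theorem incidenceGraph_goldTransform_adj_fresh (i : MixedClause F)
    (w : V ⊕ ↥(↑(goldTransform F fresh) : Set (Clause V))) :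
    (IncidenceGraph (↑(goldTransform F fresh) : Set (Clause V))).Adj (.inl (fresh i.1)) w ↔
      w = halfVertex fresh i true ∨ w = halfVertex fresh i false := by
  rcases w with u | ⟨D, hD⟩
  · simp only [halfVertex, not_incidenceGraph_adj_inl_inl, reduceCtorEq, or_self]
  rw [incidenceGraph_adj_inl_inr]
  rcases mem_goldTransform.1 hD with ⟨hDF, -⟩ | ⟨C, hC, hmix, b, rfl⟩
  · refine iff_of_false (hnew _ i.2.1 i.2.2 D hDF) ?_
    simp only [halfVertex, Sum.inr.injEq, Subtype.mk.injEq]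
    rintro (rfl | rfl) <;> exact goldHalf_notMem hnew i.2.1 i.2.2 _ hDF
  · have hi : VarInClause (fresh i.1) (goldHalf fresh b C) ↔ i = ⟨C, hC, hmix⟩ :=
      ⟨fun h => Subtype.ext (eq_of_varInClause_fresh_goldHalf hinj hnew i.2.1 i.2.2 hC hmix h),
        fun h => h ▸ varInClause_goldHalf.2 (.inr rfl)⟩
    rw [hi, show (Sum.inr ⟨goldHalf fresh b C, hD⟩ : V ⊕ ↥(↑(goldTransform F fresh) : Set _)) =
      halfVertex fresh ⟨C, hC, hmix⟩ b from rfl, halfVertex_inj hinj hnew,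
      halfVertex_inj hinj hnew]
    cases b <;> simp [eq_comm]

theorem goldRep_injective (sgn : MixedClause F → Bool) : (goldRep fresh sgn).Injective := by
  rintro (u | ⟨C, hC⟩) (u' | ⟨C', hC'⟩) h <;> simp only [goldRep] at h
  · exact congrArg _ (Sum.inl_injective h)
  · split_ifs at h
    simp only [halfVertex, reduceCtorEq] at h
  · split_ifs at h
    simp only [halfVertex, reduceCtorEq] at h
  congr
  split_ifs at h with hmix hmix' hmix'
  · exact congrArg Subtype.val ((halfVertex_inj hinj hnew).1 h).1
  all_goals simp only [halfVertex, Sum.inr.injEq, Subtype.mk.injEq] at h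
  · exact absurd (h ▸ hC') (goldHalf_notMem hnew hC hmix _)
  · exact absurd (h ▸ hC) (goldHalf_notMem hnew hC' hmix' _)
  · exact h

section Side

variable {sgn : MixedClause F → Bool} {v : MixedClause F → V}

theorem SimpleGraph.IsMinorOf.suppressedGoldGraph {γ : Type*} {H : SimpleGraph γ}
    (hH : ∀ b, 3 ≤ (H.neighborSet b).encard) (hv : ∀ i w, (!sgn i, w) ∈ i.1 ↔ w = v i)
    (h : H.IsMinorOf (IncidenceGraph (↑(goldTransform F fresh) : Set (Clause V)))) :
    H.IsMinorOf (_root_.suppressedGoldGraph fresh sgn v) := by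
  refine h.suppressPath hH (fun i w => ?_) (fun i w => ?_)
    (fun i j h => ((halfVertex_inj hinj hnew).1 h).1) (fun _ _ => Sum.inr_ne_inl)
    (fun i j h => ?_) (fun _ _ => Sum.inr_ne_inl) (fun _ _ => Sum.inl_ne_inr) (fun i j h => ?_)
  · simp only [incidenceGraph_goldTransform_adj_halfVertex, hv]
    constructor
    · rintro ⟨u, rfl, rfl | rfl⟩
      exacts [.inl rfl, .inr rfl]
    · rintro (rfl | rfl)
      exacts [⟨_, rfl, .inl rfl⟩, ⟨_, rfl, .inr rfl⟩]
  · rw [incidenceGraph_goldTransform_adj_fresh hinj hnew]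
    cases sgn i
    exacts [Iff.rfl, or_comm]
  · exact hnew _ j.2.1 j.2.2 _ i.2.1 (Sum.inl_injective h ▸ varInClause_of_mem ((hv i _).2 rfl))
  · obtain ⟨rfl, h⟩ := (halfVertex_inj hinj hnew).1 h
    exact (Bool.eq_not_self _).1 h

theorem not_suppressedGoldGraph_adj {w : V ⊕ ↥(↑(goldTransform F fresh) : Set (Clause V))}
    (hw : w ∉ Set.range (goldRep fresh sgn))
    (u : V ⊕ ↥(↑(goldTransform F fresh) : Set (Clause V))) :
    ¬ (suppressedGoldGraph fresh sgn v).Adj w u := by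
  obtain ⟨i, rfl⟩ := exists_eq_halfVertex_of_notMem_range_goldRep hw
  refine SimpleGraph.not_suppress_adj_left (x := fun i => halfVertex fresh i (!sgn i))
    (fun _ => Sum.inl_ne_inr) (fun j h => ?_) u
  obtain ⟨rfl, h⟩ := (halfVertex_inj hinj hnew).1 h
  exact (Bool.eq_not_self _).1 h

theorem comap_goldRep_le (hv : ∀ i, VarInClause (v i) i.1) :
    (suppressedGoldGraph fresh sgn v).comap (goldRep fresh sgn) ≤
      IncidenceGraph (↑F : Set (Clause V)) := by
  intro p q hpq
  rcases SimpleGraph.suppressPath_adj hpq with ⟨hG, hp, hq⟩ | ⟨i, hi⟩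
  · rcases p with u | D <;> rcases q with u' | D'
    · exact absurd hG not_incidenceGraph_adj_inl_inl
    · exact incidenceGraph_adj_inl_inr.2
        (varInClause_of_adj_goldRep (fun i h => hp ⟨i, h ▸ rfl⟩) hG)
    · exact incidenceGraph_adj_inr_inl.2
        (varInClause_of_adj_goldRep (fun i h => hq ⟨i, h ▸ rfl⟩) hG.symm)
    · simp only [goldRep] at hG
      split_ifs at hG <;> exact absurd hG not_incidenceGraph_adj_inr_inr
  · have hc : halfVertex fresh i (sgn i) = goldRep fresh sgn (.inr ⟨i.1, i.2.1⟩) :=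
      (goldRep_mixedClause sgn i).symm
    have ha : (Sum.inl (v i) : V ⊕ ↥(↑(goldTransform F fresh) : Set (Clause V))) =
      goldRep fresh sgn (.inl (v i)) := rfl
    rw [hc, ha] at hi
    simp only [Sym2.eq_iff, (goldRep_injective hinj hnew sgn).eq_iff] at hi
    rcases hi with ⟨rfl, rfl⟩ | ⟨rfl, rfl⟩
    exacts [incidenceGraph_adj_inl_inr.2 (hv i), incidenceGraph_adj_inr_inl.2 (hv i)]

end Side

theorem isMinorOf_incidenceGraph_of_goldTransform {γ : Type*} {H : SimpleGraph γ}
    (hH : ∀ b, 3 ≤ (H.neighborSet b).encard) (hsize : ∀ C ∈ F, (C.image Prod.snd).card ≤ 3)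
    (hnocomp : ∀ C ∈ F, ∀ v : V, ¬ ((true, v) ∈ C ∧ (false, v) ∈ C))
    (h : H.IsMinorOf (IncidenceGraph (↑(goldTransform F fresh) : Set (Clause V)))) :
    H.IsMinorOf (IncidenceGraph (↑F : Set (Clause V))) := by
  choose sgn v hv using fun i : MixedClause F =>
    exists_side_eq_singleton (hsize i.1 i.2.1) (hnocomp i.1 i.2.1) i.2.2
  have hH' : ∀ b, ∃ b', H.Adj b b' := fun b =>
    Set.nonempty_of_encard_ne_zero (s := H.neighborSet b) fun h0 => by simpa [h0] using hH b
  exact ((h.suppressedGoldGraph hinj hnew (sgn := fun i => !sgn i) hH (by simpa using hv)).comap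
    hH' (goldRep_injective hinj hnew _) fun _ => not_suppressedGoldGraph_adj hinj hnew).mono
    (comap_goldRep_le hinj hnew fun i => varInClause_of_mem ((hv i _).2 rfl))

end Fresh

end GoldTransform

/-- If every clause of `F` has two or three distinct variables, no clause
contains a complementary pair, and every occurring variable appears in exactly
three clauses — one literal in two clauses and the complementary literal in
one clause — then after applying Gold's rule to every mixed clause (with fresh
and pairwise distinct new variables), every variable of the resulting instance
appears in at most three clauses, and the incidence graph remains planar if
the original incidence graph was planar. -/
theorem gold_transform_bounded_and_planar {V : Type*} [DecidableEq V]
    (F : Finset (Clause V)) (fresh : Clause V → V)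
    (hfresh_inj : Set.InjOn fresh {C | C ∈ F ∧ IsMixed C})
    (hfresh_new : ∀ C ∈ F, IsMixed C → ∀ C' ∈ F, ¬ VarInClause (fresh C) C')
    (hsize : ∀ C ∈ F, (C.image Prod.snd).card = 2 ∨ (C.image Prod.snd).card = 3)
    (hnocomp : ∀ C ∈ F, ∀ v : V, ¬ ((true, v) ∈ C ∧ (false, v) ∈ C))
    (happ : ∀ x : V, (∃ C ∈ F, VarInClause x C) →
      (posApps x F = 2 ∧ negApps x F = 1) ∨ (posApps x F = 1 ∧ negApps x F = 2)) :
    (∀ x : V, appearances x (goldTransform F fresh) ≤ 3) ∧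
    ((IncidenceGraph (↑F : Set (Clause V))).IsPlanar →
      (IncidenceGraph (↑(goldTransform F fresh) : Set (Clause V))).IsPlanar) := by
  refine ⟨appearances_goldTransform_le_three hfresh_inj hfresh_new happ, fun hplanar => ?_⟩
  have hsize' : ∀ C ∈ F, (C.image Prod.snd).card ≤ 3 := fun C hC => by
    rcases hsize C hC with h | h <;> omega
  exact ⟨fun h => hplanar.1 (isMinorOf_incidenceGraph_of_goldTransform hfresh_inj hfresh_new
      three_le_encard_neighborSet_completeGraph hsize' hnocomp h),
    fun h => hplanar.2 (isMinorOf_incidenceGraph_of_goldTransform hfresh_inj hfresh_new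
      three_le_encard_neighborSet_completeBipartiteGraph hsize' hnocomp h)⟩
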